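/- Every element of the prime field of a field K is Tyszka-characterizable: for each x in the prime field there exists a finite set A ⊆ K containing x such that every pseudo-morphism φ : A → K satisfies φ(x) = x. -/
import Mathlib

/-- A pseudo-morphism on a subset `A` of a field `K`. -/
def IsPseudoMorphism {K : Type*} [Field K] (A : Set K) (φ : K → K) : Prop :=
  ((0 : K) ∈ A → φ 0 = 0) ∧
  ((1 : K) ∈ A → φ 1 = 1) ∧
  (∀ a b : K, a ∈ A → b ∈ A → a + b ∈ A → φ a + φ b = φ (a + b)) ∧
  (∀ a b : K, a ∈ A → b ∈ A → a * b ∈ A → φ a * φ b = φ (a * b))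

lemma IsPseudoMorphism.mono {K : Type*} [Field K] {A C : Set K} {φ : K → K}
    (h : IsPseudoMorphism C φ) (hAC : A ⊆ C) : IsPseudoMorphism A φ :=
  ⟨fun h0 => h.1 (hAC h0), fun h1 => h.2.1 (hAC h1),
   fun a b ha hb hab => h.2.2.1 a b (hAC ha) (hAC hb) (hAC hab),
   fun a b ha hb hab => h.2.2.2 a b (hAC ha) (hAC hb) (hAC hab)⟩

def TyC {K : Type*} [Field K] (x : K) : Prop :=
  ∃ A : Set K, A.Finite ∧ x ∈ A ∧
    ∀ φ : K → K, IsPseudoMorphism A φ → φ x = x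

lemma TC_one {K : Type*} [Field K] : TyC (1 : K) :=
  ⟨{1}, Set.finite_singleton _, rfl, fun φ h => h.2.1 rfl⟩

lemma TC_zero {K : Type*} [Field K] : TyC (0 : K) :=
  ⟨{0}, Set.finite_singleton _, rfl, fun φ h => h.1 rfl⟩

lemma TC_add {K : Type*} [Field K] {x y : K} (hx : TyC x) (hy : TyC y) : TyC (x + y) := by
  obtain ⟨A, hAf, hxA, hA⟩ := hx
  obtain ⟨B, hBf, hyB, hB⟩ := hy
  refine ⟨A ∪ B ∪ {x + y}, ((hAf.union hBf).union (Set.finite_singleton _)),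
    Or.inr rfl, fun φ h => ?_⟩
  have hx' : φ x = x := hA φ (h.mono (fun a ha => Or.inl (Or.inl ha)))
  have hy' : φ y = y := hB φ (h.mono (fun a ha => Or.inl (Or.inr ha)))
  have := h.2.2.1 x y (Or.inl (Or.inl hxA)) (Or.inl (Or.inr hyB)) (Or.inr rfl)
  rw [hx', hy'] at this
  exact this.symm

lemma TC_mul {K : Type*} [Field K] {x y : K} (hx : TyC x) (hy : TyC y) : TyC (x * y) := by
  obtain ⟨A, hAf, hxA, hA⟩ := hx
  obtain ⟨B, hBf, hyB, hB⟩ := hy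
  refine ⟨A ∪ B ∪ {x * y}, ((hAf.union hBf).union (Set.finite_singleton _)),
    Or.inr rfl, fun φ h => ?_⟩
  have hx' : φ x = x := hA φ (h.mono (fun a ha => Or.inl (Or.inl ha)))
  have hy' : φ y = y := hB φ (h.mono (fun a ha => Or.inl (Or.inr ha)))
  have := h.2.2.2 x y (Or.inl (Or.inl hxA)) (Or.inl (Or.inr hyB)) (Or.inr rfl)
  rw [hx', hy'] at this
  exact this.symm

lemma TC_neg {K : Type*} [Field K] {x : K} (hx : TyC x) : TyC (-x) := by
  obtain ⟨A, hAf, hxA, hA⟩ := hx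
  refine ⟨A ∪ {-x} ∪ {0}, ((hAf.union (Set.finite_singleton _)).union (Set.finite_singleton _)),
    Or.inl (Or.inr rfl), fun φ h => ?_⟩
  have hx' : φ x = x := hA φ (h.mono (fun a ha => Or.inl (Or.inl ha)))
  have h0 : φ 0 = 0 := h.1 (Or.inr rfl)
  have := h.2.2.1 x (-x) (Or.inl (Or.inl hxA)) (Or.inl (Or.inr rfl))
    (by rw [add_neg_cancel]; exact Or.inr rfl)
  rw [add_neg_cancel, hx', h0] at this
  linear_combination this

lemma TC_inv {K : Type*} [Field K] {x : K} (hx : TyC x) : TyC x⁻¹ := by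
  rcases eq_or_ne x 0 with rfl | hx0
  · rw [inv_zero]; exact TC_zero
  obtain ⟨A, hAf, hxA, hA⟩ := hx
  refine ⟨A ∪ {x⁻¹} ∪ {1}, ((hAf.union (Set.finite_singleton _)).union (Set.finite_singleton _)),
    Or.inl (Or.inr rfl), fun φ h => ?_⟩
  have hx' : φ x = x := hA φ (h.mono (fun a ha => Or.inl (Or.inl ha)))
  have h1 : φ 1 = 1 := h.2.1 (Or.inr rfl)
  have := h.2.2.2 x x⁻¹ (Or.inl (Or.inl hxA)) (Or.inl (Or.inr rfl))
    (by rw [mul_inv_cancel₀ hx0]; exact Or.inr rfl)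
  rw [mul_inv_cancel₀ hx0, hx', h1] at this
  exact eq_inv_of_mul_eq_one_right this

theorem primeField_elements_are_TC {K : Type*} [Field K] (x : K)
    (hx : x ∈ (⊥ : Subfield K)) :
    ∃ A : Set K, A.Finite ∧ x ∈ A ∧
      ∀ φ : K → K, IsPseudoMorphism A φ → φ x = x := by
  rw [← Subfield.closure_empty] at hx
  show TyC x
  induction hx using Subfield.closure_induction with
  | mem y hy => exact absurd hy (Set.notMem_empty y)
  | one => exact TC_one
  | add a b _ _ ha hb => exact TC_add ha hb
  | neg a _ ha => exact TC_neg ha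
  | inv a _ ha => exact TC_inv ha
  | mul a b _ _ ha hb => exact TC_mul ha hb
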